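/- arXiv:2209.04035 — 2 statements merged into one kernel-verified Lean document; each statement's English description precedes it below -/
import Mathlib

section
/- Let s₁, ..., s₅ be the normalized shapelets forming the rows of the matrix B (as in the shapelet construction with w = 4), and let x, y ∈ ℝ⁴ be vectors with non-constant entries. Then x and y are mapped to the same point under z ↦ B·z' (where z' is the scaled standard normal form) if and only if x can be obtained from y by a translation and a positive scaling. -/
noncomputable section
open Matrix BigOperators

/-- Mean of the entries of a vector. -/
def vmean {w : ℕ} (v : Fin w → ℝ) : ℝ := (∑ i, v i) / w

/-- Population standard deviation of the entries of a vector. -/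
def vstd {w : ℕ} (v : Fin w → ℝ) : ℝ := Real.sqrt ((∑ i, (v i - vmean v) ^ 2) / w)

/-- Scaled standard normal form  s' = (s - μ)/(√w σ). -/
def stdize {w : ℕ} (v : Fin w → ℝ) : Fin w → ℝ :=
  fun i => (v i - vmean v) / (Real.sqrt w * vstd v)

/-- Euclidean (ℓ²) norm of a vector in `Fin w → ℝ`. -/
def enorm {w : ℕ} (v : Fin w → ℝ) : ℝ := Real.sqrt (∑ i, v i ^ 2)

/-- The five shapelets of interest. -/
def shapelets : Fin 5 → Fin 4 → ℝ :=
  ![![1, 2, 4, 8], ![1, 2, 3, 4], ![-1, -0.5, -0.25, -0.125],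
    ![-1, -2, -4, -8], ![4, 3, 2, 1]]

/-- The matrix `B` whose rows are the scaled-standard-normalized shapelets. -/
def B : Matrix (Fin 5) (Fin 4) ℝ := fun i => stdize (shapelets i)

lemma vstd_sh_pos (i : Fin 5) : 0 < vstd (shapelets i) := by
  fin_cases i <;>
  · unfold vstd; apply Real.sqrt_pos.mpr
    norm_num [shapelets, vmean, Fin.sum_univ_four, Matrix.cons_val_two, Matrix.cons_val_three, Matrix.head_cons, Matrix.tail_cons]

lemma Binj (u v : Fin 4 → ℝ) (hu : u 0 + u 1 + u 2 + u 3 = 0)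
    (hv : v 0 + v 1 + v 2 + v 3 = 0)
    (h : B.mulVec u = B.mulVec v) : u = v := by
  have key : ∀ i : Fin 5,
      ∑ j, (shapelets i j - vmean (shapelets i)) * u j =
      ∑ j, (shapelets i j - vmean (shapelets i)) * v j := by
    intro i
    have hi := congrFun h i
    have hc : Real.sqrt ((4:ℕ):ℝ) * vstd (shapelets i) ≠ 0 :=
      ne_of_gt (mul_pos (Real.sqrt_pos.mpr (by norm_num)) (vstd_sh_pos i))
    simp only [B, Matrix.mulVec, dotProduct, Fin.sum_univ_four, stdize, div_mul_eq_mul_div,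
      ← add_div] at hi
    rw [div_eq_div_iff hc hc] at hi
    simp only [Fin.sum_univ_four]
    have := mul_right_cancel₀ hc hi
    linarith [this]
  have k0 := key 0
  have k1 := key 1
  have k2 := key 2
  norm_num [shapelets, vmean, Fin.sum_univ_four, Matrix.cons_val_two, Matrix.cons_val_three, Matrix.head_cons, Matrix.tail_cons] at k0 k1 k2
  have e0 : u 0 = v 0 := by linarith
  have e1 : u 1 = v 1 := by linarith
  have e2 : u 2 = v 2 := by linarith
  have e3 : u 3 = v 3 := by linarith
  funext i
  fin_cases i
  exacts [e0, e1, e2, e3]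

lemma stdize_sum (x : Fin 4 → ℝ) :
    stdize x 0 + stdize x 1 + stdize x 2 + stdize x 3 = 0 := by
  simp only [stdize, vmean, Fin.sum_univ_four]
  ring

lemma sqrt4 : Real.sqrt ((4:ℕ):ℝ) = 2 := by
  rw [show (((4:ℕ)):ℝ) = 2 ^ 2 by norm_num, Real.sqrt_sq (by norm_num)]

/-- Two non-constant vectors are mapped to the same point of shapelet space `z ↦ B·z'`
iff one is obtained from the other by a translation and a positive scaling. -/
theorem shapelet_map_eq_iff_affine (x y : Fin 4 → ℝ)
    (hx : vstd x > 0) (hy : vstd y > 0) :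
    B.mulVec (stdize x) = B.mulVec (stdize y) ↔
      ∃ a > (0 : ℝ), ∃ b : ℝ, ∀ i, x i = a * y i + b := by
  constructor
  · intro h
    have heq : stdize x = stdize y := Binj _ _ (stdize_sum x) (stdize_sum y) h
    refine ⟨vstd x / vstd y, div_pos hx hy, vmean x - (vstd x / vstd y) * vmean y, ?_⟩
    intro i
    have hi := congrFun heq i
    simp only [stdize, sqrt4] at hi
    rw [div_eq_div_iff (by positivity) (by positivity)] at hi
    have h2 : (x i - vmean x) * vstd y = (y i - vmean y) * vstd x := by
      nlinarith [hi]
    field_simp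
    nlinarith [h2]
  · rintro ⟨a, ha, b, hxy⟩
    have hm : vmean x = a * vmean y + b := by
      simp only [vmean, Fin.sum_univ_four, hxy 0, hxy 1, hxy 2, hxy 3, Nat.cast_ofNat]
      ring
    have hs : vstd x = a * vstd y := by
      unfold vstd
      have h1 : ((∑ i, (x i - vmean x) ^ 2) / ((4:ℕ):ℝ)) =
          a ^ 2 * ((∑ i, (y i - vmean y) ^ 2) / ((4:ℕ):ℝ)) := by
        simp only [Fin.sum_univ_four, hxy 0, hxy 1, hxy 2, hxy 3, hm, Nat.cast_ofNat]
        ring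
      rw [h1, Real.sqrt_mul (sq_nonneg a), Real.sqrt_sq ha.le]
    have heq : stdize x = stdize y := by
      funext i
      simp only [stdize, hs, hxy i, hm]
      rw [show a * y i + b - (a * vmean y + b) = a * (y i - vmean y) by ring,
        show Real.sqrt ((4:ℕ):ℝ) * (a * vstd y) = a * (Real.sqrt ((4:ℕ):ℝ) * vstd y) by ring,
        mul_div_mul_left _ _ (ne_of_gt ha)]
    rw [heq]
end
end

section
/- Suppose B has unit-norm rows and its rank-determining submatrix plus the all-ones row forms an invertible matrix C (as in the shapelet construction). If x', y' are zero-mean vectors in ℝʷ with B(x' - y') = δ and δ' is the subvector of δ corresponding to the selected rows, then ‖x' - y'‖₂ ≤ ‖C⁻¹‖_F · ‖δ‖₂. -/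
noncomputable section
open Matrix BigOperators

/-- Euclidean (ℓ²) norm of a vector in `Fin w → ℝ`. -/
def vecEnorm {w : ℕ} (v : Fin w → ℝ) : ℝ := Real.sqrt (∑ i, v i ^ 2)

/-- Frobenius norm of a matrix. -/
def frob {m w : ℕ} (C : Matrix (Fin m) (Fin w) ℝ) : ℝ :=
  Real.sqrt (∑ i, ∑ j, C i j ^ 2)

lemma enorm_mulVec_le {n p : ℕ} (A : Matrix (Fin n) (Fin p) ℝ) (v : Fin p → ℝ) :
    vecEnorm (A.mulVec v) ≤ frob A * vecEnorm v := by
  unfold vecEnorm frob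
  rw [← Real.sqrt_mul (by positivity)]
  apply Real.sqrt_le_sqrt
  rw [Finset.sum_mul]
  apply Finset.sum_le_sum
  intro i _
  simpa [Matrix.mulVec, dotProduct] using
    Finset.sum_mul_sq_le_sq_mul_sq Finset.univ (fun j => A i j) v

/-- Suppose `B` has unit-norm rows, and `C` is an invertible `w×w` matrix whose row `i₀`
is the all-ones row and whose other rows are (distinct) rows of `B` selected via `ρ`.
If `x'`, `y'` have zero mean and `B(x' - y') = δ`, then
`‖x' - y'‖₂ ≤ ‖C⁻¹‖_F · ‖δ‖₂`. -/
theorem stdize_diff_bound {m w : ℕ} (B : Matrix (Fin m) (Fin w) ℝ)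
    (hrows : ∀ i, vecEnorm (B i) = 1)
    (C : Matrix (Fin w) (Fin w) ℝ) (hC : IsUnit C)
    (i₀ : Fin w) (ρ : Fin w → Fin m)
    (hinj : ∀ i j, i ≠ i₀ → j ≠ i₀ → ρ i = ρ j → i = j)
    (hrowC : ∀ i, i ≠ i₀ → C i = B (ρ i))
    (hones : C i₀ = fun _ => 1)
    (x' y' : Fin w → ℝ) (δ : Fin m → ℝ)
    (hx : ∑ i, x' i = 0) (hy : ∑ i, y' i = 0)
    (hδ : B.mulVec (x' - y') = δ) :
    vecEnorm (x' - y') ≤ frob C⁻¹ * vecEnorm δ := by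
  set z := x' - y' with hz
  set δ' : Fin w → ℝ := fun i => if i = i₀ then 0 else δ (ρ i) with hδ'
  have hCz : C.mulVec z = δ' := by
    funext i
    by_cases h : i = i₀
    · subst h
      simp only [Matrix.mulVec, dotProduct, hones, hδ', if_pos rfl]
      simp [hz, Pi.sub_apply, Finset.sum_sub_distrib, hx, hy]
    · simp only [Matrix.mulVec, dotProduct, hrowC i h, hδ', if_neg h]
      rw [← hδ]
      rfl
  have hzeq : z = C⁻¹.mulVec δ' := by
    rw [← hCz, Matrix.mulVec_mulVec, Matrix.nonsing_inv_mul C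
      ((Matrix.isUnit_iff_isUnit_det C).mp hC), Matrix.one_mulVec]
  have h1 : vecEnorm z ≤ frob C⁻¹ * vecEnorm δ' := hzeq ▸ enorm_mulVec_le C⁻¹ δ'
  have h2 : vecEnorm δ' ≤ vecEnorm δ := by
    apply Real.sqrt_le_sqrt
    have : ∑ i, δ' i ^ 2 = ∑ i ∈ Finset.univ.erase i₀, δ (ρ i) ^ 2 := by
      rw [← Finset.sum_erase (a := i₀) Finset.univ (f := fun i => δ' i ^ 2)
        (by simp [hδ'])]
      exact Finset.sum_congr rfl fun i hi => by
        simp [hδ', Finset.ne_of_mem_erase hi]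
    rw [this, ← Finset.sum_image (f := fun j => δ j ^ 2)
      (fun i hi j hj hij => hinj i j (Finset.ne_of_mem_erase hi)
        (Finset.ne_of_mem_erase hj) hij)]
    exact Finset.sum_le_sum_of_subset_of_nonneg (Finset.subset_univ _)
      (fun j _ _ => sq_nonneg _)
  calc vecEnorm z ≤ frob C⁻¹ * vecEnorm δ' := h1
    _ ≤ frob C⁻¹ * vecEnorm δ := by
        apply mul_le_mul_of_nonneg_left h2
        exact Real.sqrt_nonneg _
end
end
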